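/- arXiv:1707.07227 — 7 statements merged into one kernel-verified Lean document; each statement's English description precedes it below -/
import Mathlib

section
/- Let M be a positive integer, let τ be an irrational real number, and let p/q be a convergent of the continued fraction expansion of τ with q > 6M. Let A, B, μ be real numbers with A > 0 and B > 1, and set ε := ‖μq‖ − M·‖τq‖, where ‖x‖ denotes the distance from the real number x to the nearest integer. If ε > 0, then there is no solution in positive integers m, n, k to the inequality 0 < mτ − n + μ < A·B^{−k} with m ≤ M and k ≥ log(Aq/ε)/log B. -/
/-- Dujella–Pethő reduction lemma. Here `|x - round x|` is the distance from the real
number `x` to the nearest integer, and `p/q` is a convergent of the continued fraction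
expansion of the irrational `τ` (i.e. `p` and `q` are the `i`-th numerator and
denominator of the continued fraction of `τ`). -/
theorem dujella_petho (M : ℕ) (hM : 0 < M) (τ : ℝ) (hτ : Irrational τ)
    (p q : ℤ) (i : ℕ)
    (hp : (p : ℝ) = (GenContFract.of τ).nums i)
    (hq : (q : ℝ) = (GenContFract.of τ).dens i)
    (hq6M : (q : ℝ) > 6 * M)
    (A B μ : ℝ) (hA : 0 < A) (hB : 1 < B)
    (ε : ℝ)
    (hε : ε = |μ * q - round (μ * q)| - M * |τ * q - round (τ * q)|)
    (hεpos : 0 < ε) :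
    ¬ ∃ m n k : ℕ, 0 < m ∧ 0 < n ∧ 0 < k ∧ (m : ℕ) ≤ M ∧
        Real.log (A * q / ε) / Real.log B ≤ (k : ℝ) ∧
        0 < (m : ℝ) * τ - n + μ ∧ (m : ℝ) * τ - n + μ < A * B ^ (-(k : ℤ)) := by
  rintro ⟨m, n, k, hm, hn, hk, hmM, hklog, hpos, hlt⟩
  have hM1 : (1:ℝ) ≤ M := by exact_mod_cast hM
  have hq0 : (0:ℝ) < q := by nlinarith
  set δ : ℝ := μ * q - round (μ * q) with hδdef
  set η : ℝ := τ * q - round (τ * q) with hηdef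
  have hδhalf : |δ| ≤ 1/2 := abs_sub_round _
  have hlogB : 0 < Real.log B := Real.log_pos hB
  -- from the log condition, A * B^(-k) * q ≤ ε
  have hAq : 0 < A * q / ε := by positivity
  have hBk : A * q / ε ≤ B ^ k := by
    have h1 : Real.log (A * q / ε) ≤ k * Real.log B := by
      rw [div_le_iff₀ hlogB] at hklog; linarith
    calc A * q / ε = Real.exp (Real.log (A * q / ε)) := (Real.exp_log hAq).symm
      _ ≤ Real.exp (k * Real.log B) := Real.exp_le_exp.mpr h1
      _ = B ^ k := by
          rw [← Real.log_pow, Real.exp_log (by positivity)]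
  have hBkpos : (0:ℝ) < B ^ k := by positivity
  have hABε : A * B ^ (-(k:ℤ)) * q ≤ ε := by
    rw [zpow_neg, zpow_natCast]
    have h2 : A * q / B ^ k ≤ ε := by
      rw [div_le_iff₀ hBkpos]
      rw [div_le_iff₀ hεpos] at hBk
      nlinarith
    calc A * (B ^ k)⁻¹ * q = A * q / B ^ k := by ring
      _ ≤ ε := h2
  set x : ℝ := ((m:ℝ) * τ - n + μ) * q with hxdef
  have hx0 : 0 < x := mul_pos hpos hq0
  have hxε : x < ε := by
    have h3 : x < A * B ^ (-(k:ℤ)) * q := mul_lt_mul_of_pos_right hlt hq0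
    linarith
  set J : ℤ := m * round (τ * q) - n * q + round (μ * q) with hJdef
  have hJx : (J:ℝ) = x - ((m:ℝ) * η + δ) := by
    rw [hJdef, hxdef, hηdef, hδdef]; push_cast; ring
  have hmη : |(m:ℝ) * η| ≤ M * |η| := by
    rw [abs_mul, abs_of_nonneg (by positivity : (0:ℝ) ≤ (m:ℝ))]
    exact mul_le_mul_of_nonneg_right (by exact_mod_cast hmM) (abs_nonneg _)
  have h3 : |(m:ℝ) * η + δ| ≤ M * |η| + |δ| :=
    le_trans (abs_add_le _ _) (by linarith)
  have h4 := abs_le.mp h3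
  have hJ0 : J = 0 := by
    have h5 : |(J:ℝ)| < 1 := by
      rw [abs_lt]
      constructor <;> [linarith; linarith]
    have h7 : |J| < 1 := by
      have h6 : ((|J| : ℤ) : ℝ) < 1 := by rw [Int.cast_abs]; exact h5
      exact_mod_cast h6
    exact Int.abs_lt_one_iff.mp h7
  have hx_eq : x = (m:ℝ) * η + δ := by
    rw [hJ0] at hJx; push_cast at hJx; linarith
  have h8 : -(M * |η|) ≤ (m:ℝ) * η := le_trans (neg_le_neg hmη) (neg_abs_le _)
  have h9 : (m:ℝ) * η ≤ M * |η| := le_trans (le_abs_self _) hmη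
  rcases abs_cases δ with ⟨h10, h11⟩ | ⟨h10, h11⟩ <;> linarith
end

section
/- If k, m, n are positive integers with F_k = P_m · P_n, then 1 + c₁(m + n − 4) ≤ k ≤ 2 + c₁(m + n − 2), where c₁ = log γ / log α; in particular, if moreover m ≤ n then k < 4n. -/
/-- The Pell sequence: P 0 = 0, P 1 = 1, P (n+2) = 2 * P (n+1) + P n. -/
def pell : ℕ → ℕ
  | 0 => 0
  | 1 => 1
  | n + 2 => 2 * pell (n + 1) + pell n

noncomputable def al : ℝ := (1 + Real.sqrt 5) / 2
noncomputable def ga : ℝ := 1 + Real.sqrt 2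

lemma one_lt_al : 1 < al := by
  have h : (1:ℝ) < Real.sqrt 5 := by
    nlinarith [Real.sq_sqrt (by norm_num : (0:ℝ) ≤ 5), Real.sqrt_nonneg 5]
  unfold al; linarith

lemma al_sq : al ^ 2 = al + 1 := by
  unfold al
  nlinarith [Real.sq_sqrt (by norm_num : (0:ℝ) ≤ 5)]

lemma one_lt_ga : 1 < ga := by
  have h : (1:ℝ) < Real.sqrt 2 := by
    nlinarith [Real.sq_sqrt (by norm_num : (0:ℝ) ≤ 2), Real.sqrt_nonneg 2]
  unfold ga; linarith

lemma ga_sq : ga ^ 2 = 2 * ga + 1 := by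
  unfold ga
  nlinarith [Real.sq_sqrt (by norm_num : (0:ℝ) ≤ 2)]

lemma ga_lt_al_sq : ga < al ^ 2 := by
  rw [al_sq]; unfold ga al
  have hs2 : Real.sqrt 2 ≤ 142/100 := by
    rw [show (142/100:ℝ) = Real.sqrt ((142/100)^2) from (Real.sqrt_sq (by norm_num)).symm]
    exact Real.sqrt_le_sqrt (by norm_num)
  have hs5 : (223/100:ℝ) ≤ Real.sqrt 5 := by
    rw [show (223/100:ℝ) = Real.sqrt ((223/100)^2) from (Real.sqrt_sq (by norm_num)).symm]
    exact Real.sqrt_le_sqrt (by norm_num)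
  linarith

lemma al_pos : 0 < al := lt_trans one_pos one_lt_al
lemma ga_pos : 0 < ga := lt_trans one_pos one_lt_ga

lemma fib_ub : ∀ k, (Nat.fib (k+1) : ℝ) ≤ al ^ k := by
  intro k
  induction k using Nat.twoStepInduction with
  | zero => simp
  | one => simpa using le_of_lt one_lt_al
  | more k ih1 ih2 =>
    have hf : (Nat.fib (k+3) : ℝ) = Nat.fib (k+2) + Nat.fib (k+1) := by
      rw [show k+3 = (k+1)+2 by ring, Nat.fib_add_two]; push_cast; ring
    have hsq : al ^ (k+2) = al ^ (k+1) + al ^ k := by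
      have h0 : al ^ (k+2) = al ^ k * al ^ 2 := by ring
      rw [h0, al_sq]; ring
    rw [show k+2+1 = k+3 by ring, hf, hsq]; exact add_le_add ih2 ih1

lemma fib_lb : ∀ k, al ^ (k+2) ≤ al ^ 3 * Nat.fib (k+1) := by
  intro k
  induction k using Nat.twoStepInduction with
  | zero =>
    have h1 : (Nat.fib 1 : ℝ) = 1 := by norm_num
    rw [show (0:ℕ)+2 = 2 from rfl, show (0:ℕ)+1 = 1 from rfl, h1, mul_one]
    exact pow_le_pow_right₀ (le_of_lt one_lt_al) (by norm_num)
  | one =>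
    rw [show (1:ℕ)+2 = 3 from rfl]
    simp [Nat.fib_two]
  | more k ih1 ih2 =>
    have hf : (Nat.fib (k+3) : ℝ) = Nat.fib (k+2) + Nat.fib (k+1) := by
      rw [show k+3 = (k+1)+2 by ring, Nat.fib_add_two]; push_cast; ring
    have hsq : al ^ (k+4) = al ^ (k+3) + al ^ (k+2) := by
      have h0 : al ^ (k+4) = al ^ (k+2) * al ^ 2 := by ring
      rw [h0, al_sq]; ring
    rw [show k+2+2 = k+4 by ring, show k+2+1 = k+3 by ring, hf, hsq, mul_add]
    exact add_le_add ih2 ih1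

lemma pell_ub : ∀ m, (pell (m+1) : ℝ) ≤ ga ^ m := by
  intro m
  induction m using Nat.twoStepInduction with
  | zero => simp [pell]
  | one =>
    have h2 : (pell 2 : ℝ) = 2 := by norm_num [pell]
    rw [h2, pow_one]
    have h : (1:ℝ) < Real.sqrt 2 := by
      nlinarith [Real.sq_sqrt (by norm_num : (0:ℝ) ≤ 2), Real.sqrt_nonneg 2]
    unfold ga; linarith
  | more m ih1 ih2 =>
    have hp : (pell (m+3) : ℝ) = 2 * pell (m+2) + pell (m+1) := by
      show ((pell (m+1+2) : ℕ) : ℝ) = _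
      rw [pell]; push_cast; ring
    have hsq : ga ^ (m+2) = 2 * ga ^ (m+1) + ga ^ m := by
      have h0 : ga ^ (m+2) = ga ^ m * ga ^ 2 := by ring
      rw [h0, ga_sq]; ring
    rw [show m+2+1 = m+3 by ring, hp, hsq]
    nlinarith [ih1, ih2]

lemma pell_lb : ∀ m, ga ^ (m+2) ≤ ga ^ 3 * pell (m+1) := by
  intro m
  induction m using Nat.twoStepInduction with
  | zero =>
    have h1 : (pell 1 : ℝ) = 1 := by norm_num [pell]
    rw [h1, mul_one]
    exact pow_le_pow_right₀ (le_of_lt one_lt_ga) (by norm_num)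
  | one =>
    have h2 : (pell 2 : ℝ) = 2 := by norm_num [pell]
    rw [show (1:ℕ)+2 = 3 from rfl, h2]
    nlinarith [pow_pos ga_pos 3]
  | more m ih1 ih2 =>
    have hp : (pell (m+3) : ℝ) = 2 * pell (m+2) + pell (m+1) := by
      show ((pell (m+1+2) : ℕ) : ℝ) = _
      rw [pell]; push_cast; ring
    have hsq : ga ^ (m+4) = 2 * ga ^ (m+3) + ga ^ (m+2) := by
      have h0 : ga ^ (m+4) = ga ^ (m+2) * ga ^ 2 := by ring
      rw [h0, ga_sq]; ring
    rw [show m+2+2 = m+4 by ring, show m+2+1 = m+3 by ring, hp, hsq]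
    nlinarith [ih1, ih2]

/-- If k, m, n are positive integers with F_k = P_m · P_n, then
1 + c₁(m + n − 4) ≤ k ≤ 2 + c₁(m + n − 2), where c₁ = log γ / log α with
α = (1+√5)/2 and γ = 1+√2; in particular, if moreover m ≤ n then k < 4n. -/
theorem index_bounds_FPP (k m n : ℕ) (hk : 0 < k) (hm : 0 < m) (hn : 0 < n)
    (h : Nat.fib k = pell m * pell n) :
    (1 + (Real.log (1 + Real.sqrt 2) / Real.log ((1 + Real.sqrt 5) / 2)) * ((m : ℝ) + n - 4)
        ≤ (k : ℝ) ∧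
      (k : ℝ) ≤
        2 + (Real.log (1 + Real.sqrt 2) / Real.log ((1 + Real.sqrt 5) / 2)) * ((m : ℝ) + n - 2))
    ∧ (m ≤ n → k < 4 * n) := by
  obtain ⟨k, rfl⟩ : ∃ k', k = k' + 1 := ⟨k - 1, by omega⟩
  obtain ⟨m, rfl⟩ : ∃ m', m = m' + 1 := ⟨m - 1, by omega⟩
  obtain ⟨n, rfl⟩ : ∃ n', n = n' + 1 := ⟨n - 1, by omega⟩
  have hgal : Real.log (1 + Real.sqrt 2) = Real.log ga := rfl
  have hlal : Real.log ((1 + Real.sqrt 5) / 2) = Real.log al := rfl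
  rw [hgal, hlal]
  set a := Real.log al with ha_def
  set g := Real.log ga with hg_def
  have ha : 0 < a := Real.log_pos one_lt_al
  have hg : 0 < g := Real.log_pos one_lt_ga
  have hpm : (0:ℝ) ≤ (pell (m+1) : ℝ) := Nat.cast_nonneg _
  have hpn : (0:ℝ) ≤ (pell (n+1) : ℝ) := Nat.cast_nonneg _
  have hfr : (Nat.fib (k+1) : ℝ) = (pell (m+1) : ℝ) * (pell (n+1) : ℝ) := by
    rw [h]; push_cast; ring
  -- upper bound chain
  have hU : al ^ (k+2) ≤ al ^ 3 * ga ^ (m+n) := by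
    calc al ^ (k+2) ≤ al ^ 3 * Nat.fib (k+1) := fib_lb k
    _ = al ^ 3 * ((pell (m+1) : ℝ) * (pell (n+1) : ℝ)) := by rw [hfr]
    _ ≤ al ^ 3 * (ga ^ m * ga ^ n) := by
        have := mul_le_mul (pell_ub m) (pell_ub n) hpn (pow_nonneg ga_pos.le m)
        nlinarith [pow_pos al_pos 3]
    _ = al ^ 3 * ga ^ (m+n) := by rw [pow_add]
  -- lower bound chain
  have hL : ga ^ (m+n+4) ≤ ga ^ 6 * al ^ k := by
    calc ga ^ (m+n+4) = ga ^ (m+2) * ga ^ (n+2) := by ring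
    _ ≤ (ga ^ 3 * pell (m+1)) * (ga ^ 3 * pell (n+1)) := by
        exact mul_le_mul (pell_lb m) (pell_lb n) (pow_pos ga_pos _).le
          (mul_nonneg (pow_pos ga_pos 3).le hpm)
    _ = ga ^ 6 * ((pell (m+1) : ℝ) * (pell (n+1) : ℝ)) := by ring
    _ = ga ^ 6 * (Nat.fib (k+1) : ℝ) := by rw [hfr]
    _ ≤ ga ^ 6 * al ^ k := by
        have := fib_ub k
        nlinarith [pow_pos ga_pos 6]
  -- take logs
  have h1 : ((k:ℝ)+2) * a ≤ 3 * a + ((m:ℝ)+n) * g := by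
    have := Real.log_le_log (pow_pos al_pos _) hU
    rw [Real.log_pow, Real.log_mul (ne_of_gt (pow_pos al_pos 3)) (ne_of_gt (pow_pos ga_pos _)),
      Real.log_pow, Real.log_pow] at this
    push_cast at this
    linarith
  have h2 : ((m:ℝ)+n+4) * g ≤ 6 * g + (k:ℝ) * a := by
    have := Real.log_le_log (pow_pos ga_pos _) hL
    rw [Real.log_pow, Real.log_mul (ne_of_gt (pow_pos ga_pos 6)) (ne_of_gt (pow_pos al_pos _)),
      Real.log_pow, Real.log_pow] at this
    push_cast at this
    linarith
  have key1 : g / a * ((m:ℝ) + n - 2) ≤ (k:ℝ) := by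
    rw [div_mul_eq_mul_div, div_le_iff₀ ha]
    nlinarith [h2]
  have key2 : (k:ℝ) - 1 ≤ g / a * ((m:ℝ) + n) := by
    rw [div_mul_eq_mul_div, le_div_iff₀ ha]
    nlinarith [h1]
  refine ⟨⟨?_, ?_⟩, ?_⟩
  · push_cast; linarith [key1]
  · push_cast; linarith [key2]
  · intro hmn
    have hmn' : (m:ℝ) ≤ (n:ℝ) := by exact_mod_cast Nat.succ_le_succ_iff.mp hmn
    have hc : g / a < 2 := by
      rw [div_lt_iff₀ ha]
      have hlt : ga < al ^ 2 := ga_lt_al_sq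
      have := Real.log_lt_log ga_pos hlt
      rw [Real.log_pow] at this
      push_cast at this
      linarith
    have hca : 0 ≤ g / a := le_of_lt (div_pos hg ha)
    have hub : (k:ℝ) - 1 ≤ 2 * ((m:ℝ) + n) := by
      have : g / a * ((m:ℝ)+n) ≤ 2 * ((m:ℝ)+n) := by
        apply mul_le_mul_of_nonneg_right hc.le
        positivity
      linarith [key2]
    have : ((k+1:ℕ):ℝ) < 4 * ((n+1:ℕ):ℝ) := by push_cast; linarith
    exact_mod_cast this
end

section
/- If k, m, n are positive integers with n > m and F_k = P_m · P_n, then |α^k/√5 − γ^{m+n}/8| < 2γ^{n−m}/√5. -/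
lemma pell_binet (n : ℕ) :
    (pell n : ℝ) * (2 * Real.sqrt 2) = (1 + Real.sqrt 2) ^ n - (1 - Real.sqrt 2) ^ n := by
  have h2 : Real.sqrt 2 ^ 2 = 2 := Real.sq_sqrt (by norm_num)
  induction n using Nat.twoStepInduction with
  | zero => simp [pell]
  | one => simp [pell]; ring
  | more n ih1 ih2 =>
    show ((2 * pell (n+1) + pell n : ℕ) : ℝ) * (2 * Real.sqrt 2) = _
    push_cast
    linear_combination 2 * ih2 + ih1 + ((1 - Real.sqrt 2)^n - (1 + Real.sqrt 2)^n) * h2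


set_option maxHeartbeats 1600000 in
/-- If k, m, n are positive integers with n > m and F_k = P_m · P_n, then
|α^k/√5 − γ^{m+n}/8| < 2γ^{n−m}/√5, where α = (1+√5)/2 and γ = 1+√2. -/
theorem approx_FPP (k m n : ℕ) (hk : 0 < k) (hm : 0 < m) (hmn : n > m)
    (h : Nat.fib k = pell m * pell n) :
    |((1 + Real.sqrt 5) / 2) ^ k / Real.sqrt 5 - (1 + Real.sqrt 2) ^ (m + n) / 8|
      < 2 * (1 + Real.sqrt 2) ^ (n - m) / Real.sqrt 5 := by
  obtain ⟨d, rfl⟩ : ∃ d, n = m + d := ⟨n - m, by omega⟩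
  have hd1 : 1 ≤ d := by omega
  set s2 := Real.sqrt 2 with hs2def
  set s5 := Real.sqrt 5 with hs5def
  have hs2 : s2 ^ 2 = 2 := Real.sq_sqrt (by norm_num)
  have hs5 : s5 ^ 2 = 5 := Real.sq_sqrt (by norm_num)
  have hs2nn : 0 ≤ s2 := Real.sqrt_nonneg 2
  have hs5pos : 0 < s5 := Real.sqrt_pos.mpr (by norm_num)
  have hs5ne : s5 ≠ 0 := ne_of_gt hs5pos
  have hs2lb : 1.41 ≤ s2 := by nlinarith
  have hs2ub : s2 ≤ 1.42 := by nlinarith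
  have hs5lb : 2.2 ≤ s5 := by nlinarith
  have hs5ub : s5 ≤ 2.3 := by nlinarith
  have hfib' : ((1 + s5) / 2) ^ k = (Nat.fib k : ℝ) * s5 + ((1 - s5) / 2) ^ k := by
    rw [Real.coe_fib_eq]
    field_simp
    rw [hs5def]
    ring
  clear_value s2 s5
  simp only [Nat.add_sub_cancel_left]
  rw [lt_div_iff₀ hs5pos]
  have hcast : (Nat.fib k : ℝ) = (pell m : ℝ) * (pell (m + d) : ℝ) := by
    exact_mod_cast h
  have hprod : (pell m : ℝ) * (pell (m + d) : ℝ) * 8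
      = ((1 + s2) ^ m - (1 - s2) ^ m) * ((1 + s2) ^ (m + d) - (1 - s2) ^ (m + d)) := by
    have hpm := pell_binet m
    have hpn := pell_binet (m + d)
    rw [← hs2def] at hpm hpn
    linear_combination ((pell (m + d) : ℝ) * (2 * s2)) * hpm
      + ((1 + s2) ^ m - (1 - s2) ^ m) * hpn
      - 4 * (pell m : ℝ) * (pell (m + d) : ℝ) * hs2
  set c : ℝ := (1 + s2) ^ m * (1 - s2) ^ m with hcdef
  have key : (((1 + s5) / 2) ^ k / s5 - (1 + s2) ^ (m + (m + d)) / 8) * s5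
      = ((1 - s5) / 2) ^ k
        + s5 * (-(c * (1 - s2) ^ d) - c * (1 + s2) ^ d
            + ((1 - s2) ^ m * (1 - s2) ^ m) * (1 - s2) ^ d) / 8 := by
    rw [sub_mul, div_mul_cancel₀ _ hs5ne, hcdef]
    linear_combination hfib' + s5 * hcast + (s5 / 8) * hprod
  calc |((1 + s5) / 2) ^ k / s5 - (1 + s2) ^ (m + (m + d)) / 8| * s5
      = |(((1 + s5) / 2) ^ k / s5 - (1 + s2) ^ (m + (m + d)) / 8) * s5| := by
        rw [abs_mul, abs_of_pos hs5pos]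
    _ < 2 * (1 + s2) ^ d := by
        rw [key]
        have hψ : |((1 - s5) / 2) ^ k| ≤ 0.65 := by
          rw [abs_pow]
          have h1 : |(1 - s5) / 2| ≤ 0.65 := by
            rw [abs_le]; constructor <;> nlinarith
          calc |(1 - s5) / 2| ^ k ≤ |(1 - s5) / 2| :=
                pow_le_of_le_one (abs_nonneg _) (by nlinarith [abs_nonneg ((1 - s5)/2)]) (by omega)
            _ ≤ 0.65 := h1
        have hδ : |1 - s2| ≤ 0.42 := by rw [abs_le]; constructor <;> nlinarith
        have hδd : |(1 - s2) ^ d| ≤ 0.42 := by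
          rw [abs_pow]
          calc |1 - s2| ^ d ≤ |1 - s2| :=
                pow_le_of_le_one (abs_nonneg _) (by nlinarith [abs_nonneg (1 - s2)]) (by omega)
            _ ≤ 0.42 := hδ
        have hcabs : |c| = 1 := by
          have h1 : (1 + s2) * (1 - s2) = -1 := by nlinarith
          rw [hcdef, ← mul_pow, h1, abs_pow, abs_neg, abs_one, one_pow]
        have hb1 : |c * (1 - s2) ^ d| ≤ 0.42 := by
          rw [abs_mul, hcabs, one_mul]; exact hδd
        have hb2 : |c * (1 + s2) ^ d| = (1 + s2) ^ d := by
          rw [abs_mul, hcabs, one_mul, abs_of_nonneg (by positivity)]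
        have hb3 : |((1 - s2) ^ m * (1 - s2) ^ m) * (1 - s2) ^ d| ≤ 0.42 := by
          rw [abs_mul, abs_mul, abs_pow, abs_pow]
          have h1 : |1 - s2| ^ m ≤ 1 := pow_le_one₀ (abs_nonneg _) (by nlinarith [abs_nonneg (1 - s2)])
          have h2 : |1 - s2| ^ d ≤ 0.42 := by rw [← abs_pow]; exact hδd
          have h0m : (0:ℝ) ≤ |1 - s2| ^ m := pow_nonneg (abs_nonneg _) m
          have h0d : (0:ℝ) ≤ |1 - s2| ^ d := pow_nonneg (abs_nonneg _) d
          have h3 : |1 - s2| ^ m * |1 - s2| ^ m ≤ 1 := by nlinarith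
          nlinarith [mul_nonneg h0m h0m]
        have hXlb : (1 : ℝ) + s2 ≤ (1 + s2) ^ d :=
          le_self_pow₀ (by nlinarith) (by omega)
        obtain ⟨ha1, ha2⟩ := abs_le.mp hψ
        obtain ⟨hb1a, hb1b⟩ := abs_le.mp hb1
        obtain ⟨hb3a, hb3b⟩ := abs_le.mp hb3
        obtain ⟨hb2a, hb2b⟩ := abs_le.mp hb2.le
        rw [abs_lt]
        constructor <;> nlinarith
end

section
/- If k, m, n are positive integers with n > m and F_k = P_m · P_n, then |(8/√5) · α^k · γ^{−(m+n)} − 1| < 16/(√5 · γ^{2m}). -/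
open Real
open scoped goldenRatio

theorem pell_mul_two_sqrt_two (n : ℕ) :
    (pell n : ℝ) * (2 * √2) = (1 + √2) ^ n - (1 - √2) ^ n := by
  have hs2 : √2 ^ 2 = 2 := sq_sqrt (by norm_num)
  induction n using Nat.twoStepInduction with
  | zero => simp [pell]
  | one => simp [pell]; ring
  | more n ih₀ ih₁ =>
    simp only [pell, Nat.cast_add, Nat.cast_mul, Nat.cast_ofNat]
    linear_combination 2 * ih₁ + ih₀ + ((1 - √2) ^ n - (1 + √2) ^ n) * hs2

theorem one_add_sqrt_two_inv : (1 + √2)⁻¹ = √2 - 1 :=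
  inv_eq_of_mul_eq_one_right (by linear_combination sq_sqrt (zero_le_two : (0 : ℝ) ≤ 2))

theorem pell_mul_two_sqrt_two_mul_pow (n : ℕ) :
    (pell n : ℝ) * (2 * √2) * (√2 - 1) ^ n = 1 - (2 * √2 - 3) ^ n := by
  have hs2 : √2 ^ 2 = 2 := sq_sqrt (by norm_num)
  have h₁ : (1 + √2) * (√2 - 1) = 1 := by linear_combination hs2
  have h₂ : (1 - √2) * (√2 - 1) = 2 * √2 - 3 := by linear_combination -hs2
  rw [pell_mul_two_sqrt_two, sub_mul, ← mul_pow, ← mul_pow, h₁, h₂, one_pow]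

theorem eight_div_sqrt_five_mul_goldenRatio_pow (k : ℕ) :
    8 / √5 * φ ^ k = 8 * Nat.fib k + 8 / √5 * ψ ^ k := by
  have : √5 ≠ 0 := by positivity
  rw [coe_fib_eq]
  field_simp
  ring

theorem linear_form_eq_of_fib_eq_pell_mul_pell {k m n : ℕ} (h : Nat.fib k = pell m * pell n) :
    8 / √5 * φ ^ k * (√2 - 1) ^ (m + n) - 1 =
      (2 * √2 - 3) ^ (m + n) - (2 * √2 - 3) ^ m - (2 * √2 - 3) ^ n +
        8 / √5 * ψ ^ k * (√2 - 1) ^ (m + n) := by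
  have hs2 : √2 ^ 2 = 2 := sq_sqrt (by norm_num)
  have hprod : (8 * Nat.fib k : ℝ) * (√2 - 1) ^ (m + n) =
      (1 - (2 * √2 - 3) ^ m) * (1 - (2 * √2 - 3) ^ n) := by
    rw [← pell_mul_two_sqrt_two_mul_pow, ← pell_mul_two_sqrt_two_mul_pow, h, pow_add]
    push_cast
    linear_combination (-4 * (pell m : ℝ) * pell n * (√2 - 1) ^ m * (√2 - 1) ^ n) * hs2
  rw [eight_div_sqrt_five_mul_goldenRatio_pow, add_mul, hprod]
  ring

theorem abs_pow_add_sub_pow_sub_pow_le {R : Type*} [Field R] [LinearOrder R]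
    [IsStrictOrderedRing R] {x : R} (hx : |x| ≤ 1) {m n : ℕ} (hmn : m ≤ n) :
    |x ^ (m + n) - x ^ m - x ^ n| ≤ 3 * |x| ^ m := by
  have h₁ : |x| ^ (m + n) ≤ |x| ^ m := pow_le_pow_of_le_one (abs_nonneg x) hx (by omega)
  have h₂ : |x| ^ n ≤ |x| ^ m := pow_le_pow_of_le_one (abs_nonneg x) hx hmn
  calc |x ^ (m + n) - x ^ m - x ^ n| ≤ |x ^ (m + n) - x ^ m| + |x ^ n| := abs_sub _ _
    _ ≤ |x ^ (m + n)| + |x ^ m| + |x ^ n| := by gcongr; exact abs_sub _ _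
    _ ≤ 3 * |x| ^ m := by simp only [abs_pow]; linarith

theorem abs_linear_form_error_lt (k : ℕ) {m n : ℕ} (hmn : m ≤ n) :
    |(2 * √2 - 3) ^ (m + n) - (2 * √2 - 3) ^ m - (2 * √2 - 3) ^ n +
        8 / √5 * ψ ^ k * (√2 - 1) ^ (m + n)| < 16 / √5 * (√2 - 1) ^ (2 * m) := by
  have hs2 : √2 ^ 2 = 2 := sq_sqrt (by norm_num)
  have hs5 : √5 ^ 2 = 5 := sq_sqrt (by norm_num)
  have hs2_gt : 1 < √2 := by nlinarith [sqrt_nonneg 2]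
  have hs2_lt : √2 < 3 / 2 := by nlinarith [sqrt_nonneg 2]
  have hs5_pos : 0 < √5 := by positivity
  have hc : |2 * √2 - 3| = (√2 - 1) ^ 2 := by
    rw [abs_of_neg (by linarith)]; linear_combination -hs2
  have hu₀ : 0 < √2 - 1 := by linarith
  have hu₁ : √2 - 1 ≤ 1 := by linarith
  have hpell_part := abs_pow_add_sub_pow_sub_pow_le (hc ▸ pow_le_one₀ hu₀.le hu₁) hmn
  rw [hc, ← pow_mul] at hpell_part
  have hfib_part : |8 / √5 * ψ ^ k * (√2 - 1) ^ (m + n)| ≤ 8 / √5 * (√2 - 1) ^ (2 * m) := by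
    rw [abs_mul, abs_mul, abs_pow, abs_pow, abs_of_pos hu₀, abs_of_pos (by positivity)]
    have hψ : |ψ| ^ k ≤ 1 := pow_le_one₀ (abs_nonneg _)
      (abs_le.mpr ⟨neg_one_lt_goldenConj.le, goldenConj_neg.le.trans zero_le_one⟩)
    have hu : (√2 - 1) ^ (m + n) ≤ (√2 - 1) ^ (2 * m) :=
      pow_le_pow_of_le_one hu₀.le hu₁ (by omega)
    calc 8 / √5 * |ψ| ^ k * (√2 - 1) ^ (m + n)
        ≤ 8 / √5 * 1 * (√2 - 1) ^ (2 * m) := by gcongr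
      _ = 8 / √5 * (√2 - 1) ^ (2 * m) := by rw [mul_one]
  have hconst : 3 < 8 / √5 := by rw [lt_div_iff₀ hs5_pos]; nlinarith
  have hu_pow : 0 < (√2 - 1) ^ (2 * m) := pow_pos hu₀ _
  calc _ ≤ _ := abs_add_le _ _
    _ ≤ 3 * (√2 - 1) ^ (2 * m) + 8 / √5 * (√2 - 1) ^ (2 * m) :=
      add_le_add hpell_part hfib_part
    _ < 8 / √5 * (√2 - 1) ^ (2 * m) + 8 / √5 * (√2 - 1) ^ (2 * m) := by gcongr
    _ = 16 / √5 * (√2 - 1) ^ (2 * m) := by ring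

theorem linear_form_FPP_1_general (k m n : ℕ) (hmn : n > m)
    (h : Nat.fib k = pell m * pell n) :
    |(8 / Real.sqrt 5) * ((1 + Real.sqrt 5) / 2) ^ k *
        (1 + Real.sqrt 2) ^ (-((m : ℤ) + n)) - 1|
      < 16 / (Real.sqrt 5 * (1 + Real.sqrt 2) ^ (2 * m)) := by
  have hzpow : (1 + √2) ^ (-((m : ℤ) + n)) = (√2 - 1) ^ (m + n) := by
    rw [← Nat.cast_add, zpow_neg, zpow_natCast, ← inv_pow, one_add_sqrt_two_inv]
  have hbound : 16 / (√5 * (1 + √2) ^ (2 * m)) = 16 / √5 * (√2 - 1) ^ (2 * m) := by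
    rw [← div_div, div_eq_mul_inv _ ((1 + √2) ^ _), ← inv_pow, one_add_sqrt_two_inv]
  rw [hzpow, hbound, ← goldenRatio, linear_form_eq_of_fib_eq_pell_mul_pell h]
  exact abs_linear_form_error_lt k hmn.le

/-- If k, m, n are positive integers with n > m and F_k = P_m · P_n, then
|(8/√5)·α^k·γ^{−(m+n)} − 1| < 16/(√5·γ^{2m}), where α = (1+√5)/2 and γ = 1+√2. -/
theorem linear_form_FPP_1 (k m n : ℕ) (hk : 0 < k) (hm : 0 < m) (hmn : n > m)
    (h : Nat.fib k = pell m * pell n) :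
    |(8 / Real.sqrt 5) * ((1 + Real.sqrt 5) / 2) ^ k *
        (1 + Real.sqrt 2) ^ (-((m : ℤ) + n)) - 1|
      < 16 / (Real.sqrt 5 * (1 + Real.sqrt 2) ^ (2 * m)) :=
  linear_form_FPP_1_general k m n hmn h
end

section
/- For all positive integers k, m, n, we have 8·α^k ≠ √5·γ^{m+n}; equivalently, (8/√5)·α^k·γ^{−(m+n)} ≠ 1. -/
lemma pow_rep (s : ℝ) (c : ℕ) (hc : s^2 = c) (k : ℕ) :
    ∃ a b : ℕ, (1 + s)^k = a + b * s ∧ 0 < a ∧ (0 < k → 0 < b) := by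
  induction k with
  | zero => exact ⟨1, 0, by simp, one_pos, by simp⟩
  | succ p ih =>
    obtain ⟨a, b, h, ha, hb⟩ := ih
    refine ⟨a + b * c, a + b, ?_, by positivity, fun _ => by positivity⟩
    rw [pow_succ, h]
    push_cast
    linear_combination (b:ℝ) * hc

lemma not_square_10 : ¬ IsSquare (10 : ℕ) := by
  rintro ⟨r, hr⟩
  have h3 : r ≤ 3 := by nlinarith
  interval_cases r <;> omega

lemma sqrt10_irr : Irrational (Real.sqrt 10) := by
  have : Irrational (Real.sqrt (10:ℕ)) := by
    rw [irrational_sqrt_natCast_iff]; exact not_square_10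
  simpa using this

/-- For all positive integers k, m, n, we have 8·α^k ≠ √5·γ^{m+n}, where
α = (1+√5)/2 and γ = 1+√2. -/
theorem lambda_one_ne_zero (k m n : ℕ) (hk : 0 < k) (hm : 0 < m) (hn : 0 < n) :
    8 * ((1 + Real.sqrt 5) / 2) ^ k ≠ Real.sqrt 5 * (1 + Real.sqrt 2) ^ (m + n) := by
  intro h
  set N := m + n with hN
  have h5 : Real.sqrt 5 ^ 2 = (5:ℝ) := Real.sq_sqrt (by norm_num)
  have h2 : Real.sqrt 2 ^ 2 = (2:ℝ) := Real.sq_sqrt (by norm_num)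
  have h5' : Real.sqrt 5 ^ 2 = ((5:ℕ):ℝ) := by rw [h5]; norm_num
  have h2' : Real.sqrt 2 ^ 2 = ((2:ℕ):ℝ) := by rw [h2]; norm_num
  have h2kpos : (0:ℝ) < 2^k := by positivity
  have hm2 : 8 * (1 + Real.sqrt 5)^k = Real.sqrt 5 * (1 + Real.sqrt 2)^N * 2^k := by
    rw [div_pow] at h
    field_simp at h
    linarith [h]
  have hsq : 64 * ((1 + Real.sqrt 5)^k)^2
      = 5 * ((2:ℝ)^k)^2 * ((1 + Real.sqrt 2)^N)^2 := by
    have h' := congrArg (· ^ 2) hm2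
    linear_combination h' + ((1 + Real.sqrt 2)^N)^2 * ((2:ℝ)^k)^2 * h5
  rw [← pow_mul (1 + Real.sqrt 5) k 2, ← pow_mul (1 + Real.sqrt 2) N 2,
    mul_comm k 2, mul_comm N 2] at hsq
  obtain ⟨A, B, hAB, hA, hB⟩ := pow_rep (Real.sqrt 5) 5 h5' (2*k)
  obtain ⟨C, D, hCD, hC, hD⟩ := pow_rep (Real.sqrt 2) 2 h2' (2*N)
  rw [hAB, hCD] at hsq
  have hBpos : 0 < B := hB (by omega)
  have hDpos : 0 < D := hD (by omega)
  set u : ℝ := 64 * B with hu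
  set v : ℝ := ((2:ℝ)^k)^2 * 5 * D with hv
  set r : ℝ := ((2:ℝ)^k)^2 * 5 * C - 64 * A with hr
  have hupos : 0 < u := by positivity
  have hvpos : 0 < v := by positivity
  have key : u * Real.sqrt 5 - v * Real.sqrt 2 = r := by
    rw [hu, hv, hr]; linear_combination hsq
  have h10 : Real.sqrt 5 * Real.sqrt 2 = Real.sqrt 10 := by
    rw [← Real.sqrt_mul (by norm_num)]; norm_num
  have key2 : 2 * u * v * Real.sqrt 10 = 5 * u^2 + 2 * v^2 - r^2 := by
    have h'' := congrArg (· ^ 2) key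
    linear_combination -h'' + u^2 * h5 + v^2 * h2 - 2*u*v*h10
  have hrat : Real.sqrt 10 = (5 * u^2 + 2 * v^2 - r^2) / (2 * u * v) := by
    rw [eq_div_iff (by positivity)]
    linear_combination key2
  apply sqrt10_irr
  rw [hrat, hu, hv, hr]
  refine ⟨((5 * (64*B)^2 + 2 * (((2^k)^2 : ℕ) * 5 * D)^2
      - (((2^k)^2 : ℕ) * 5 * C - 64 * A)^2 : ℤ) : ℚ)
      / ((2 * (64 * B) * (((2^k)^2 : ℕ) * 5 * D) : ℤ) : ℚ), ?_⟩
  push_cast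
  ring
end

section
/- For all positive integers k, m, n, we have 2√2 · α^k ≠ √5 · P_m · γ^n; equivalently, (2√2/(√5·P_m)) · α^k · γ^{−n} ≠ 1. -/
lemma pell_pos : ∀ m : ℕ, 0 < pell (m + 1) := by
  intro m
  induction m using Nat.strong_induction_on with
  | _ m ih =>
    match m with
    | 0 => simp [pell]
    | m + 1 =>
      have := ih m (by omega)
      simp only [pell]
      omega

noncomputable def alp : ℝ := (1 + Real.sqrt 5) / 2
noncomputable def gam : ℝ := 1 + Real.sqrt 2

lemma sq5 : Real.sqrt 5 ^ 2 = 5 := Real.sq_sqrt (by norm_num)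
lemma sq2 : Real.sqrt 2 ^ 2 = 2 := Real.sq_sqrt (by norm_num)

lemma alp_sq : alp ^ 2 = alp + 1 := by
  have := sq5
  unfold alp; ring_nf; nlinarith [sq5]

lemma gam_sq : gam ^ 2 = 2 * gam + 1 := by
  unfold gam; nlinarith [sq2]

lemma alp_pow (k : ℕ) : ∃ c d : ℕ, 0 < c + d ∧ 0 < d ∧ alp ^ (k + 1) = c + d * alp := by
  induction k with
  | zero => exact ⟨0, 1, by norm_num, by norm_num, by norm_num⟩
  | succ k ih =>
    obtain ⟨c, d, hcd, hd, h⟩ := ih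
    refine ⟨d, c + d, by omega, by omega, ?_⟩
    have : alp ^ (k + 2) = alp ^ (k + 1) * alp := by ring
    rw [this, h]
    push_cast
    nlinarith [alp_sq]

lemma gam_pow (n : ℕ) : ∃ e f : ℕ, 0 < f ∧ gam ^ (n + 1) = e + f * gam := by
  induction n with
  | zero => exact ⟨0, 1, by norm_num, by norm_num⟩
  | succ n ih =>
    obtain ⟨e, f, hf, h⟩ := ih
    refine ⟨f, e + 2 * f, by omega, ?_⟩
    have : gam ^ (n + 2) = gam ^ (n + 1) * gam := by ring
    rw [this, h]
    push_cast
    nlinarith [gam_sq]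

lemma key (A B C D : ℕ) (hB : 0 < B) (hD : 0 < D)
    (h : (A : ℝ) + B * Real.sqrt 5 = C + D * Real.sqrt 2) : False := by
  have h10 : Irrational (Real.sqrt 10) := by
    rw [show ((10:ℝ)) = ((10:ℕ):ℝ) by norm_num, irrational_sqrt_natCast_iff]
    rintro ⟨r, hr⟩
    have h3 : r ≤ 3 := by nlinarith
    interval_cases r <;> omega
  have hs : Real.sqrt 5 * Real.sqrt 2 = Real.sqrt 10 := by
    rw [← Real.sqrt_mul (by norm_num)]; norm_num
  -- (B√5 - D√2)^2 = (C - A)^2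
  have h1 : (B:ℝ) * Real.sqrt 5 - D * Real.sqrt 2 = (C:ℝ) - A := by linarith
  have h2 : 5 * (B:ℝ)^2 + 2 * D^2 - 2 * (B*D) * Real.sqrt 10 = ((C:ℝ) - A)^2 := by
    have h1sq := congrArg (· ^ 2) h1
    linear_combination h1sq - (B:ℝ)^2 * sq5 - (D:ℝ)^2 * sq2 + 2 * B * D * hs
  have hBD : (0:ℝ) < 2 * (B*D) := by positivity
  have : Real.sqrt 10 = (5 * (B:ℝ)^2 + 2 * D^2 - ((C:ℝ) - A)^2) / (2 * (B*D)) := by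
    field_simp
    linarith
  apply h10
  rw [this]
  refine ⟨(5 * (B:ℚ)^2 + 2 * D^2 - ((C:ℚ) - A)^2) / (2 * (B*D)), ?_⟩
  push_cast
  ring

/-- For all positive integers k, m, n, we have 2√2·α^k ≠ √5·P_m·γ^n, where
α = (1+√5)/2 and γ = 1+√2. -/
theorem lambda_two_ne_zero (k m n : ℕ) (hk : 0 < k) (hm : 0 < m) (hn : 0 < n) :
    2 * Real.sqrt 2 * ((1 + Real.sqrt 5) / 2) ^ k
      ≠ Real.sqrt 5 * (pell m : ℝ) * (1 + Real.sqrt 2) ^ n := by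
  intro h
  set P := pell m with hP
  have hPpos : 0 < P := by
    obtain ⟨m', rfl⟩ : ∃ m', m = m' + 1 := ⟨m - 1, by omega⟩
    exact pell_pos m'
  -- square both sides
  have hsq : 8 * alp ^ (2 * k) = 5 * (P:ℝ)^2 * gam ^ (2 * n) := by
    have := congrArg (· ^ 2) h
    have e1 : (2 * Real.sqrt 2 * ((1 + Real.sqrt 5) / 2) ^ k) ^ 2
        = 4 * Real.sqrt 2 ^ 2 * alp ^ (2 * k) := by
      unfold alp; rw [show 2 * k = k * 2 from mul_comm 2 k, pow_mul]; ring
    have e2 : (Real.sqrt 5 * (P : ℝ) * (1 + Real.sqrt 2) ^ n) ^ 2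
        = Real.sqrt 5 ^ 2 * (P:ℝ)^2 * gam ^ (2 * n) := by
      unfold gam; rw [show 2 * n = n * 2 from mul_comm 2 n, pow_mul]; ring
    rw [e1, e2, sq2, sq5] at this
    linarith
  obtain ⟨k', hk'⟩ : ∃ k', 2 * k = k' + 1 := ⟨2 * k - 1, by omega⟩
  obtain ⟨n', hn'⟩ : ∃ n', 2 * n = n' + 1 := ⟨2 * n - 1, by omega⟩
  obtain ⟨c, d, hcd, hd, hα⟩ := alp_pow k'
  obtain ⟨e, f, hf, hγ⟩ := gam_pow n'
  rw [hk', hα, hn', hγ] at hsq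
  -- 8(c + d α) = 5P²(e + f γ)
  -- α = (1+√5)/2, γ = 1+√2
  -- (8c + 4d) + 4d√5 = (5P²e + 5P²f) + 5P²f√2
  apply key (8 * c + 4 * d) (4 * d) (5 * P^2 * e + 5 * P^2 * f) (5 * P^2 * f)
    (by omega) (by positivity)
  push_cast
  unfold alp gam at hsq
  linear_combination hsq
end

section
/- If k, m, n are positive integers with n > m and P_k = F_m · F_n, then |(√5/(2√2 · F_m)) · γ^k · α^{−n} − 1| < 4/α^{2n}. -/
open Real goldenRatio

lemma two_mul_sqrt_two_mul_pell (k : ℕ) :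
    2 * √2 * pell k = (1 + √2) ^ k - (1 - √2) ^ k := by
  have h2 : √2 ^ 2 = 2 := sq_sqrt zero_le_two
  induction k using Nat.strong_induction_on with
  | _ k ih =>
    match k with
    | 0 => simp [pell]
    | 1 => simp [pell]; ring
    | k + 2 =>
      rw [pell, Nat.cast_add, Nat.cast_mul, Nat.cast_two]
      linear_combination 2 * ih (k + 1) (by omega) + ih k (by omega) +
        ((1 - √2) ^ k - (1 + √2) ^ k) * h2

lemma sqrt_five_mul_fib (n : ℕ) : √5 * Nat.fib n = φ ^ n - ψ ^ n := by
  rw [coe_fib_eq, mul_div_cancel₀ _ (by positivity)]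

lemma abs_pow_mul_pow_of_mul_eq_neg_one {R : Type*} [CommRing R] [LinearOrder R] [IsOrderedRing R]
    {a b : R} (h : a * b = -1) (hb : 0 ≤ b) (n : ℕ) : |a ^ n| * b ^ n = 1 := by
  rw [← abs_of_nonneg (pow_nonneg hb n), ← abs_mul, ← mul_pow, h, abs_pow, abs_neg, abs_one,
    one_pow]

lemma sqrt_five_mul_lt_six_mul_sqrt_two_mul {c f u v x y : ℝ} (hc : 1 ≤ c) (hf : 1 ≤ f)
    (hu : 1 ≤ u) (hv : 1 ≤ v) (hux : 2 * √2 * c * f = u - x) (hvy : √5 * f = v - y)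
    (hxu : |x| * u = 1) (hyv : |y| * v = 1) : √5 * v < 6 * √2 * c * u := by
  have h2 : √2 ^ 2 = 2 := sq_sqrt zero_le_two
  have h5 : √5 ^ 2 = 5 := sq_sqrt (by norm_num)
  have hx : -1 ≤ x := (abs_le.mp (by nlinarith [abs_nonneg x])).1
  have hy : y ≤ 1 := (abs_le.mp (by nlinarith [abs_nonneg y])).2
  have hv' : √5 * v ≤ 5 * f + √5 := by nlinarith [sqrt_nonneg 5]
  have hu' : 6 * √2 * c * u = 24 * c ^ 2 * f + 6 * √2 * c * x := by
    linear_combination (-6 * √2 * c) * hux + 12 * c ^ 2 * f * h2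
  have hcx : 0 ≤ √2 * c * (x + 1) :=
    mul_nonneg (mul_nonneg (sqrt_nonneg 2) (by linarith)) (by linarith)
  have hs2 : √2 < 3 / 2 := by nlinarith [sqrt_nonneg 2]
  have hs5 : √5 < 3 := by nlinarith [sqrt_nonneg 5]
  nlinarith [mul_le_mul hc hc zero_le_one (by linarith),
    mul_nonneg (sub_nonneg.2 hc) (sub_nonneg.2 hf)]

lemma abs_sqrt_five_div_mul_sub_one_lt {c f u v x y : ℝ} (hc : 1 ≤ c) (hf : 1 ≤ f) (hu : 1 ≤ u)
    (hv : 1 ≤ v) (hux : 2 * √2 * c * f = u - x) (hvy : √5 * f = v - y) (hxu : |x| * u = 1)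
    (hyv : |y| * v = 1) : |√5 / (2 * √2 * c) * u * v⁻¹ - 1| < 4 / v ^ 2 := by
  have hkey := sqrt_five_mul_lt_six_mul_sqrt_two_mul hc hf hu hv hux hvy hxu hyv
  have hd : 0 < 2 * √2 * c := by positivity
  have hdv : 0 < 2 * √2 * c * v := by positivity
  have hs5 : 0 < √5 := by positivity
  have hlin : √5 / (2 * √2 * c) * u * v⁻¹ - 1 =
      (√5 * x - 2 * √2 * c * y) / (2 * √2 * c * v) := by
    field_simp
    linear_combination (-√5) * hux + 2 * √2 * c * hvy
  have hsmall : √5 / (2 * √2 * c * u * v) < 3 / v ^ 2 := by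
    rw [div_lt_div_iff₀ (by positivity) (by positivity)]
    nlinarith
  calc |√5 / (2 * √2 * c) * u * v⁻¹ - 1|
      ≤ (√5 * |x| + 2 * √2 * c * |y|) / (2 * √2 * c * v) := by
        rw [hlin, abs_div, abs_of_pos hdv]
        gcongr
        refine (abs_sub _ _).trans_eq ?_
        rw [abs_mul, abs_mul, abs_of_pos hs5, abs_of_pos hd]
    _ = √5 / (2 * √2 * c * u * v) + 1 / v ^ 2 := by
        rw [eq_div_of_mul_eq (by positivity) hxu, eq_div_of_mul_eq (by positivity) hyv]
        field_simp
    _ < 4 / v ^ 2 := by linarith [add_div 3 1 (v ^ 2)]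

theorem linear_form_PFF_2_general (k m n : ℕ) (hm : 0 < m) (hmn : n > m)
    (h : pell k = Nat.fib m * Nat.fib n) :
    |(Real.sqrt 5 / (2 * Real.sqrt 2 * (Nat.fib m : ℝ))) * (1 + Real.sqrt 2) ^ k *
        ((1 + Real.sqrt 5) / 2) ^ (-(n : ℤ)) - 1|
      < 4 / ((1 + Real.sqrt 5) / 2) ^ (2 * n) := by
  have hFm : (1 : ℝ) ≤ Nat.fib m := by exact_mod_cast Nat.fib_pos.mpr hm
  have hFn : (1 : ℝ) ≤ Nat.fib n := by exact_mod_cast Nat.fib_pos.mpr (by omega)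
  have hδγ : (1 - √2) * (1 + √2) = -1 := by
    linear_combination -(sq_sqrt zero_le_two : √2 ^ 2 = 2)
  rw [zpow_neg, zpow_natCast, pow_mul']
  refine abs_sqrt_five_div_mul_sub_one_lt hFm hFn (one_le_pow₀ (by simp))
    (one_le_pow₀ one_lt_goldenRatio.le) ?_ (sqrt_five_mul_fib n)
    (abs_pow_mul_pow_of_mul_eq_neg_one hδγ (by positivity) k)
    (abs_pow_mul_pow_of_mul_eq_neg_one goldenConj_mul_goldenRatio goldenRatio_pos.le n)
  rw [mul_assoc, ← Nat.cast_mul, ← h, two_mul_sqrt_two_mul_pell]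

/-- If k, m, n are positive integers with n > m and P_k = F_m · F_n, then
|(√5/(2√2·F_m))·γ^k·α^{−n} − 1| < 4/α^{2n}, where α = (1+√5)/2 and γ = 1+√2. -/
theorem linear_form_PFF_2 (k m n : ℕ) (hk : 0 < k) (hm : 0 < m) (hmn : n > m)
    (h : pell k = Nat.fib m * Nat.fib n) :
    |(Real.sqrt 5 / (2 * Real.sqrt 2 * (Nat.fib m : ℝ))) * (1 + Real.sqrt 2) ^ k *
        ((1 + Real.sqrt 5) / 2) ^ (-(n : ℤ)) - 1|
      < 4 / ((1 + Real.sqrt 5) / 2) ^ (2 * n) :=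
  linear_form_PFF_2_general k m n hm hmn h
end
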